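/- If λ > 0, then for every t ≥ 1, Δ_{t+1} ≤ Δ_t + (2 / p_min²) · ‖φ_t(s_{t+1})‖²_{A_t^{−1}}, where ‖v‖²_{A_t^{−1}} := vᵀ A_t^{−1} v. -/

import Mathlib

/-!
Write `ψ_i := φ_i(s_{i+1})`. Then `Δ_{t+1} - Δ_t = ℓ_{t+1}(θ̂_{t+1}) - ℓ_{t+1}(θ̂_t)`, and `ℓ_{t+1}`
is `ℓ_t + log ⟨ψ_t, ·⟩` up to a constant. Every `⟨ψ_i, θ⟩` with `θ ∈ P` lies in `(0, 1]`, where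
`log` is `1`-strongly concave, so `ℓ_t` is strongly concave with respect to the quadratic form of
`A_t`, and its maximiser `θ̂_t` over the convex set `P` satisfies
`ℓ_t(θ̂_{t+1}) ≤ ℓ_t(θ̂_t) - ‖θ̂_{t+1} - θ̂_t‖²_{A_t} / 2`. The new term is at most
`⟨ψ_t, θ̂_{t+1} - θ̂_t⟩ / p_min ≤ ‖ψ_t‖_{A_t⁻¹} ‖θ̂_{t+1} - θ̂_t‖_{A_t} / p_min` by `log x ≤ x - 1`
and Cauchy–Schwarz, and AM–GM bounds the sum by `‖ψ_t‖²_{A_t⁻¹} / (2 p_min²)`.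
-/

open Matrix Finset Filter Topology

theorem Real.strongConcaveOn_log_Ioc : StrongConcaveOn (Set.Ioc 0 1) 1 Real.log := by
  rw [strongConcaveOn_iff_convex]
  simp only [Real.norm_eq_abs, sq_abs]
  refine concaveOn_of_hasDerivWithinAt2_nonpos (convex_Ioc 0 1)
    (f' := fun x => x⁻¹ + x) (f'' := fun x => -(x ^ 2)⁻¹ + 1) ?_ ?_ ?_ ?_
  · exact (Real.continuousOn_log.mono fun x hx => hx.1.ne').add (by fun_prop)
  · rw [interior_Ioc]
    rintro x ⟨hx0, -⟩
    refine HasDerivAt.hasDerivWithinAt ?_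
    convert (Real.hasDerivAt_log hx0.ne').add ((hasDerivAt_pow 2 x).const_mul (1 / 2 : ℝ)) using 1
    · rfl
    · push_cast; ring
  · rw [interior_Ioc]
    rintro x ⟨hx0, -⟩
    exact ((hasDerivAt_inv hx0.ne').add (hasDerivAt_id x)).hasDerivWithinAt
  · rw [interior_Ioc]
    rintro x ⟨hx0, hx1⟩
    have : 1 ≤ (x ^ 2)⁻¹ := one_le_inv₀ (by positivity) |>.2 (by nlinarith)
    linarith

theorem le_of_forall_one_sub_mul_le {Q D : ℝ} (h : ∀ c ∈ Set.Ioo (0 : ℝ) 1, (1 - c) * Q ≤ D) :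
    Q ≤ D := by
  have hlim : Tendsto (fun c : ℝ => (1 - c) * Q) (𝓝[>] 0) (𝓝 Q) := by
    have : Tendsto (fun c : ℝ => (1 - c) * Q) (𝓝 0) (𝓝 ((1 - 0) * Q)) :=
      ((continuous_const.sub continuous_id).mul continuous_const).tendsto 0
    simpa using this.mono_left nhdsWithin_le_nhds
  exact le_of_tendsto hlim (eventually_of_mem (Ioo_mem_nhdsGT one_pos) h)

theorem IsMaxOn.add_half_le_of_concavity {E : Type*} [AddCommGroup E] [Module ℝ E] {f : E → ℝ}
    {P : Set E} {x₀ x₁ : E} {Q : ℝ} (hmax : IsMaxOn f P x₀) (hP : Convex ℝ P) (hx₀ : x₀ ∈ P)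
    (hx₁ : x₁ ∈ P)
    (hf : ∀ c ∈ Set.Ioo (0 : ℝ) 1,
      (1 - c) * f x₀ + c * f x₁ + c * (1 - c) / 2 * Q ≤ f ((1 - c) • x₀ + c • x₁)) :
    f x₁ + Q / 2 ≤ f x₀ := by
  suffices Q / 2 ≤ f x₀ - f x₁ by linarith
  refine le_of_forall_one_sub_mul_le fun c hc => ?_
  have hmem : (1 - c) • x₀ + c • x₁ ∈ P := hP hx₀ hx₁ (by linarith [hc.2]) hc.1.le (by ring)
  have := (hf c hc).trans (hmax hmem)
  nlinarith [hc.1]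

theorem mem_Ioc_of_pos_of_sum_eq_one {S : Type*} [Fintype S] {f : S → ℝ} (hf : ∀ s, 0 < f s)
    (hsum : ∑ s, f s = 1) (s : S) : f s ∈ Set.Ioc 0 1 :=
  ⟨hf s, hsum ▸ single_le_sum (fun s' _ => (hf s').le) (mem_univ s)⟩

theorem Matrix.PosDef.dotProduct_sq_le {n : Type*} [Fintype n] [DecidableEq n]
    {M : Matrix n n ℝ} (hM : M.PosDef) (u v : n → ℝ) :
    (u ⬝ᵥ v) ^ 2 ≤ (u ⬝ᵥ M⁻¹ *ᵥ u) * (v ⬝ᵥ M *ᵥ v) := by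
  set w := M⁻¹ *ᵥ u
  have hMw : M *ᵥ w = u := by
    rw [mulVec_mulVec, mul_nonsing_inv _ ((isUnit_iff_isUnit_det M).mp hM.isUnit), one_mulVec]
  have hMt : Mᵀ = M := by simpa using hM.isHermitian.eq
  have hwv : w ⬝ᵥ M *ᵥ v = u ⬝ᵥ v := by
    rw [dotProduct_mulVec, ← mulVec_transpose, hMt, hMw]
  have hvw : v ⬝ᵥ M *ᵥ w = u ⬝ᵥ v := by rw [hMw, dotProduct_comm]
  have hww : w ⬝ᵥ M *ᵥ w = u ⬝ᵥ w := by rw [hMw, dotProduct_comm]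
  have := (Matrix.toBilin' M).apply_mul_apply_le_of_forall_zero_le
    (fun x => by simpa [toBilin'_apply'] using hM.posSemidef.dotProduct_mulVec_nonneg x) w v
  simp only [toBilin'_apply', hwv, hvw, hww] at this
  nlinarith [this]

theorem Real.log_sub_log_le_of_sq_le {p u₀ u₁ N Q : ℝ} (hp : 0 < p) (hpu₀ : p ≤ u₀)
    (hu₁ : 0 < u₁) (hN : 0 ≤ N) (hQ : 0 ≤ Q) (h : (u₁ - u₀) ^ 2 ≤ N * Q) :
    Real.log u₁ - Real.log u₀ ≤ Q / 2 + N / (2 * p ^ 2) := by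
  have hu₀ : 0 < u₀ := hp.trans_le hpu₀
  have hlog : Real.log u₁ - Real.log u₀ ≤ (u₁ - u₀) / u₀ := by
    rw [← Real.log_div hu₁.ne' hu₀.ne', sub_div, div_self hu₀.ne']
    exact Real.log_le_sub_one_of_pos (div_pos hu₁ hu₀)
  have hscale : (p * ((u₁ - u₀) / u₀)) ^ 2 ≤ (u₁ - u₀) ^ 2 :=
    calc (p * ((u₁ - u₀) / u₀)) ^ 2 = (u₁ - u₀) ^ 2 * (p / u₀) ^ 2 := by ring
      _ ≤ (u₁ - u₀) ^ 2 * 1 := by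
        gcongr
        exact pow_le_one₀ (by positivity) (div_le_one_of_le₀ hpu₀ hu₀.le)
      _ = (u₁ - u₀) ^ 2 := mul_one _
  have hamgm : 2 * (p ^ 2 * ((u₁ - u₀) / u₀)) ≤ p ^ 2 * Q + N :=
    two_mul_le_add_of_sq_le_mul (by positivity) hN (by nlinarith)
  have hbound : Q / 2 + N / (2 * p ^ 2) = (p ^ 2 * Q + N) / (2 * p ^ 2) := by
    field_simp
  rw [hbound, le_div_iff₀ (by positivity)]
  nlinarith

namespace MLE

variable {ι n : Type*} [Fintype n]

-- `ℓ_t` up to the additive constant `∑ i, log ⟨ψ_i, θ*⟩`.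
noncomputable def logLik (I : Finset ι) (ψ : ι → n → ℝ) (lam : ℝ) (θ : n → ℝ) : ℝ :=
  ∑ i ∈ I, Real.log (ψ i ⬝ᵥ θ) - lam / 2 * (θ ⬝ᵥ θ)

def gram [DecidableEq n] (I : Finset ι) (ψ : ι → n → ℝ) (lam : ℝ) : Matrix n n ℝ :=
  lam • 1 + ∑ i ∈ I, vecMulVec (ψ i) (ψ i)

variable {I : Finset ι} {ψ : ι → n → ℝ} {lam : ℝ}

theorem logLik_insert [DecidableEq ι] {j : ι} (hj : j ∉ I) (θ : n → ℝ) :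
    logLik (insert j I) ψ lam θ = logLik I ψ lam θ + Real.log (ψ j ⬝ᵥ θ) := by
  simp only [logLik, sum_insert hj]
  ring

theorem sum_log_div_sub_eq_logLik_sub {θ : n → ℝ} {g : ι → ℝ} (hθ : ∀ i ∈ I, ψ i ⬝ᵥ θ ≠ 0)
    (hg : ∀ i ∈ I, g i ≠ 0) :
    ∑ i ∈ I, Real.log (ψ i ⬝ᵥ θ / g i) - lam / 2 * (θ ⬝ᵥ θ)
      = logLik I ψ lam θ - ∑ i ∈ I, Real.log (g i) := by
  rw [logLik, sum_congr rfl fun i hi => Real.log_div (hθ i hi) (hg i hi), sum_sub_distrib]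
  ring

variable [DecidableEq n]

theorem dotProduct_gram_mulVec (v : n → ℝ) :
    v ⬝ᵥ gram I ψ lam *ᵥ v = lam * (v ⬝ᵥ v) + ∑ i ∈ I, (ψ i ⬝ᵥ v) ^ 2 := by
  rw [dotProduct_comm]
  simp only [gram, add_mulVec, smul_mulVec, one_mulVec, sum_mulVec, vecMulVec_mulVec,
    op_smul_eq_smul, add_dotProduct, smul_dotProduct, sum_dotProduct, smul_eq_mul, sq]

theorem posDef_gram (hlam : 0 < lam) : (gram I ψ lam).PosDef :=
  (PosDef.one.smul hlam).add_posSemidef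
    (posSemidef_sum I fun i _ => by simpa using posSemidef_vecMulVec_self_star (ψ i))

theorem dotProduct_gram_inv_mulVec_nonneg (hlam : 0 < lam) (v : n → ℝ) :
    0 ≤ v ⬝ᵥ (gram I ψ lam)⁻¹ *ᵥ v := by
  simpa only [star_trivial] using (posDef_gram hlam).inv.posSemidef.dotProduct_mulVec_nonneg v

theorem logLik_strongConcavity {θ₀ θ₁ : n → ℝ} (h₀ : ∀ i ∈ I, ψ i ⬝ᵥ θ₀ ∈ Set.Ioc 0 1)
    (h₁ : ∀ i ∈ I, ψ i ⬝ᵥ θ₁ ∈ Set.Ioc 0 1) {c : ℝ} (hc₀ : 0 ≤ c) (hc₁ : c ≤ 1) :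
    (1 - c) * logLik I ψ lam θ₀ + c * logLik I ψ lam θ₁
        + c * (1 - c) / 2 * ((θ₁ - θ₀) ⬝ᵥ gram I ψ lam *ᵥ (θ₁ - θ₀))
      ≤ logLik I ψ lam ((1 - c) • θ₀ + c • θ₁) := by
  have hlog : ∀ i ∈ I, (1 - c) * Real.log (ψ i ⬝ᵥ θ₀) + c * Real.log (ψ i ⬝ᵥ θ₁)
      + c * (1 - c) / 2 * (ψ i ⬝ᵥ (θ₁ - θ₀)) ^ 2
        ≤ Real.log (ψ i ⬝ᵥ ((1 - c) • θ₀ + c • θ₁)) := fun i hi => by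
    have := Real.strongConcaveOn_log_Ioc.2 (h₀ i hi) (h₁ i hi) (sub_nonneg.2 hc₁) hc₀ (by ring)
    simp only [smul_eq_mul, Real.norm_eq_abs, sq_abs] at this
    rw [dotProduct_add, dotProduct_smul, dotProduct_smul, dotProduct_sub, smul_eq_mul, smul_eq_mul]
    linarith [sub_sq_comm (ψ i ⬝ᵥ θ₀) (ψ i ⬝ᵥ θ₁)]
  have hreg : ((1 - c) • θ₀ + c • θ₁) ⬝ᵥ ((1 - c) • θ₀ + c • θ₁)
      = (1 - c) * (θ₀ ⬝ᵥ θ₀) + c * (θ₁ ⬝ᵥ θ₁) - c * (1 - c) * ((θ₁ - θ₀) ⬝ᵥ (θ₁ - θ₀)) := by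
    simp only [dotProduct_add, add_dotProduct, dotProduct_sub, sub_dotProduct, dotProduct_smul,
      smul_dotProduct, smul_eq_mul, dotProduct_comm θ₁ θ₀]
    ring
  have hsum := sum_le_sum hlog
  rw [sum_add_distrib, sum_add_distrib, ← mul_sum, ← mul_sum, ← mul_sum] at hsum
  rw [dotProduct_gram_mulVec]
  simp only [logLik, hreg]
  linarith

theorem logLik_insert_sub_logLik_insert_le [DecidableEq ι] {P : Set (n → ℝ)} {j : ι}
    {θ₀ θ₁ : n → ℝ} {p : ℝ} (hlam : 0 < lam) (hp : 0 < p) (hP : Convex ℝ P)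
    (hψP : ∀ θ ∈ P, ∀ i ∈ I, ψ i ⬝ᵥ θ ∈ Set.Ioc 0 1) (hj : j ∉ I)
    (hmax : IsMaxOn (logLik I ψ lam) P θ₀) (hθ₀ : θ₀ ∈ P) (hθ₁ : θ₁ ∈ P)
    (hp₀ : p ≤ ψ j ⬝ᵥ θ₀) (hpos₁ : 0 < ψ j ⬝ᵥ θ₁) :
    logLik (insert j I) ψ lam θ₁ - logLik (insert j I) ψ lam θ₀
      ≤ (ψ j ⬝ᵥ (gram I ψ lam)⁻¹ *ᵥ ψ j) / (2 * p ^ 2) := by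
  have hG := posDef_gram (I := I) (ψ := ψ) hlam
  set Q := (θ₁ - θ₀) ⬝ᵥ gram I ψ lam *ᵥ (θ₁ - θ₀)
  have hQ : 0 ≤ Q := by
    simpa only [star_trivial] using hG.posSemidef.dotProduct_mulVec_nonneg (θ₁ - θ₀)
  have hdecrease : logLik I ψ lam θ₁ + Q / 2 ≤ logLik I ψ lam θ₀ :=
    hmax.add_half_le_of_concavity hP hθ₀ hθ₁ fun c hc =>
      logLik_strongConcavity (hψP θ₀ hθ₀) (hψP θ₁ hθ₁) hc.1.le hc.2.le
  have hCS : (ψ j ⬝ᵥ θ₁ - ψ j ⬝ᵥ θ₀) ^ 2 ≤ (ψ j ⬝ᵥ (gram I ψ lam)⁻¹ *ᵥ ψ j) * Q := by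
    rw [← dotProduct_sub]
    exact hG.dotProduct_sq_le _ _
  have hstep := Real.log_sub_log_le_of_sq_le hp hp₀ hpos₁
    (dotProduct_gram_inv_mulVec_nonneg hlam _) hQ hCS
  rw [logLik_insert hj, logLik_insert hj]
  linarith

end MLE

open MLE

theorem vbmle_Delta_one_step_recursion_general
    (d : ℕ)
    (lam pmin : ℝ) (hlam : 0 < lam)
    (hpmin0 : 0 < pmin)
    (S A : Type) [Fintype S]
    (φ : S → A → S → (Fin d → ℝ))
    (P : Set (Fin d → ℝ)) (hPconv : Convex ℝ P)
    (hPsum : ∀ θ ∈ P, ∀ s a, (∑ s', φ s a s' ⬝ᵥ θ) = 1)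
    (hPmin : ∀ θ ∈ P, ∀ s a s', pmin ≤ φ s a s' ⬝ᵥ θ)
    (θstar : Fin d → ℝ) (hθstar : θstar ∈ P)
    (s : ℕ → S) (a : ℕ → A)
    (ℓ : ℕ → (Fin d → ℝ) → ℝ)
    (hℓ : ∀ t θ, ℓ t θ =
      (∑ i ∈ Finset.Icc 1 (t - 1),
        Real.log ((φ (s i) (a i) (s (i + 1)) ⬝ᵥ θ) / (φ (s i) (a i) (s (i + 1)) ⬝ᵥ θstar)))
      - lam / 2 * (θ ⬝ᵥ θ))
    (θhat : ℕ → (Fin d → ℝ))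
    (hθhatmem : ∀ t, θhat t ∈ P)
    (hθhatmax : ∀ t, 1 ≤ t → ∀ θ ∈ P, ℓ t θ ≤ ℓ t (θhat t))
    (A_ : ℕ → Matrix (Fin d) (Fin d) ℝ)
    (hA : ∀ t, A_ t = lam • (1 : Matrix (Fin d) (Fin d) ℝ) +
      ∑ i ∈ Finset.Icc 1 (t - 1),
        vecMulVec (φ (s i) (a i) (s (i + 1))) (φ (s i) (a i) (s (i + 1))))
    (Δ : ℕ → ℝ)
    (hΔ : ∀ t, Δ t =
      (∑ i ∈ Finset.Icc 1 (t - 1),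
        Real.log ((φ (s i) (a i) (s (i + 1)) ⬝ᵥ θhat t) / (φ (s i) (a i) (s (i + 1)) ⬝ᵥ θhat i)))
      - lam / 2 * ((θhat t ⬝ᵥ θhat t) - (θhat 0 ⬝ᵥ θhat 0))) :
    ∀ t, 1 ≤ t →
      Δ (t + 1) ≤ Δ t + 2 / pmin ^ 2 *
        (φ (s t) (a t) (s (t + 1)) ⬝ᵥ (A_ t)⁻¹ *ᵥ φ (s t) (a t) (s (t + 1))) := by
  intro t ht
  set ψ : ℕ → Fin d → ℝ := fun i => φ (s i) (a i) (s (i + 1))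
  set I := Icc 1 (t - 1)
  have hψP : ∀ θ ∈ P, ∀ i, ψ i ⬝ᵥ θ ∈ Set.Ioc 0 1 := fun θ hθ i =>
    mem_Ioc_of_pos_of_sum_eq_one (fun s' => hpmin0.trans_le (hPmin θ hθ (s i) (a i) s'))
      (hPsum θ hθ (s i) (a i)) _
  have hne : ∀ θ ∈ P, ∀ (J : Finset ℕ), ∀ i ∈ J, ψ i ⬝ᵥ θ ≠ 0 :=
    fun θ hθ _ i _ => (hψP θ hθ i).1.ne'
  have hmax : IsMaxOn (logLik I ψ lam) P (θhat t) := isMaxOn_iff.2 fun θ hθ => by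
    have := hθhatmax t ht θ hθ
    rw [hℓ, hℓ, sum_log_div_sub_eq_logLik_sub (hne θ hθ I) (hne θstar hθstar I),
      sum_log_div_sub_eq_logLik_sub (hne _ (hθhatmem t) I) (hne θstar hθstar I)] at this
    linarith
  have hΔ' : ∀ τ, Δ τ = logLik (Icc 1 (τ - 1)) ψ lam (θhat τ)
      - ∑ i ∈ Icc 1 (τ - 1), Real.log (ψ i ⬝ᵥ θhat i) + lam / 2 * (θhat 0 ⬝ᵥ θhat 0) := fun τ => by
    rw [hΔ, mul_sub, ← sub_add, sum_log_div_sub_eq_logLik_sub (hne _ (hθhatmem τ) _)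
      fun i hi => hne _ (hθhatmem i) _ i hi]
  have htI : t ∉ I := by
    simp only [I, mem_Icc]
    omega
  have hIcc : Icc 1 (t + 1 - 1) = insert t I := by
    ext i
    simp only [I, mem_insert, mem_Icc]
    omega
  have hG : A_ t = gram I ψ lam := hA t
  have hN : 0 ≤ ψ t ⬝ᵥ (gram I ψ lam)⁻¹ *ᵥ ψ t := dotProduct_gram_inv_mulVec_nonneg hlam _
  calc Δ (t + 1)
      = Δ t + (logLik (insert t I) ψ lam (θhat (t + 1)) - logLik (insert t I) ψ lam (θhat t)) := by
        rw [hΔ', hΔ' t, hIcc, sum_insert htI, logLik_insert htI (θhat t)]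
        ring
    _ ≤ Δ t + (ψ t ⬝ᵥ (gram I ψ lam)⁻¹ *ᵥ ψ t) / (2 * pmin ^ 2) := by
        gcongr
        exact logLik_insert_sub_logLik_insert_le hlam hpmin0 hPconv (fun θ hθ i _ => hψP θ hθ i)
          htI hmax (hθhatmem t) (hθhatmem (t + 1)) (hPmin _ (hθhatmem t) _ _ _)
          (hψP _ (hθhatmem _) t).1
    _ ≤ Δ t + 2 / pmin ^ 2 * (ψ t ⬝ᵥ (A_ t)⁻¹ *ᵥ ψ t) := by
        rw [hG]
        field_simp
        linarith

/-- one-step recursion for `Δ_t`: if `λ > 0`, then for every `t ≥ 1`,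
`Δ_{t+1} ≤ Δ_t + (2 / p_min²) · ‖φ_t(s_{t+1})‖²_{A_t⁻¹}`. -/
theorem vbmle_Delta_one_step_recursion
    (d : ℕ) (hd : 1 ≤ d)
    (lam L pmin : ℝ) (hlam : 0 < lam) (hL : 0 < L)
    (hpmin0 : 0 < pmin) (hpmin1 : pmin ≤ 1)
    (S A : Type) [Fintype S] [Nonempty S] [Fintype A] [Nonempty A]
    (φ : S → A → S → (Fin d → ℝ))
    (hφ : ∀ s a s', Real.sqrt (φ s a s' ⬝ᵥ φ s a s') ≤ L)
    (P : Set (Fin d → ℝ)) (hPne : P.Nonempty) (hPcomp : IsCompact P) (hPconv : Convex ℝ P)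
    (hPsum : ∀ θ ∈ P, ∀ s a, (∑ s', φ s a s' ⬝ᵥ θ) = 1)
    (hPmin : ∀ θ ∈ P, ∀ s a s', pmin ≤ φ s a s' ⬝ᵥ θ)
    (θstar : Fin d → ℝ) (hθstar : θstar ∈ P)
    (s : ℕ → S) (a : ℕ → A)
    (ℓ : ℕ → (Fin d → ℝ) → ℝ)
    (hℓ : ∀ t θ, ℓ t θ =
      (∑ i ∈ Finset.Icc 1 (t - 1),
        Real.log ((φ (s i) (a i) (s (i + 1)) ⬝ᵥ θ) / (φ (s i) (a i) (s (i + 1)) ⬝ᵥ θstar)))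
      - lam / 2 * (θ ⬝ᵥ θ))
    (θhat : ℕ → (Fin d → ℝ))
    (hθhatmem : ∀ t, θhat t ∈ P)
    (hθhatmax : ∀ t, 1 ≤ t → ∀ θ ∈ P, ℓ t θ ≤ ℓ t (θhat t))
    (hθhat0 : θhat 0 = θhat 1)
    (A_ : ℕ → Matrix (Fin d) (Fin d) ℝ)
    (hA : ∀ t, A_ t = lam • (1 : Matrix (Fin d) (Fin d) ℝ) +
      ∑ i ∈ Finset.Icc 1 (t - 1),
        vecMulVec (φ (s i) (a i) (s (i + 1))) (φ (s i) (a i) (s (i + 1))))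
    (Δ : ℕ → ℝ)
    (hΔ : ∀ t, Δ t =
      (∑ i ∈ Finset.Icc 1 (t - 1),
        Real.log ((φ (s i) (a i) (s (i + 1)) ⬝ᵥ θhat t) / (φ (s i) (a i) (s (i + 1)) ⬝ᵥ θhat i)))
      - lam / 2 * ((θhat t ⬝ᵥ θhat t) - (θhat 0 ⬝ᵥ θhat 0))) :
    ∀ t, 1 ≤ t →
      Δ (t + 1) ≤ Δ t + 2 / pmin ^ 2 *
        (φ (s t) (a t) (s (t + 1)) ⬝ᵥ (A_ t)⁻¹ *ᵥ φ (s t) (a t) (s (t + 1))) :=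
  vbmle_Delta_one_step_recursion_general d lam pmin hlam hpmin0 S A φ P hPconv hPsum hPmin θstar
    hθstar s a ℓ hℓ θhat hθhatmem hθhatmax A_ hA Δ hΔ
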